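/- arXiv:1901.06442 — 2 statements merged into one kernel-verified Lean document; each statement's English description precedes it below -/
import Mathlib

section
/- Consider a wiretap channel with noiseless main channel where Alice encodes a uniformly distributed secret S^m ∈ F_2^m by coset coding with parity check matrix A = [I_m | A_2] ∈ F_2^{m×n}, and Eve observes Z^n = X^n ⊕ V^n where V^n is an i.i.d. Bernoulli(δ) noise vector independent of the encoding. Then the mutual information satisfies I(S^m; Z^n) = m - H(A·V^n), where H denotes Shannon entropy in bits. -/
open Finset

/-- Shannon entropy in bits of a pmf on a finite type. -/
noncomputable def ent {α : Type*} [Fintype α] (p : α → ℝ) : ℝ :=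
  -∑ a, p a * Real.logb 2 (p a)

/-- pmf of an i.i.d. Bernoulli(δ) noise vector over `F_2`. -/
def noisePMF (δ : ℝ) {ι : Type*} [Fintype ι] (v : ι → ZMod 2) : ℝ :=
  ∏ i, if v i = 1 then δ else 1 - δ

/-- Coset-coding codeword `X^n = (S^m ⊕ A_2·U^{n-m}, U^{n-m})`, with the `n = m + k`
coordinates indexed by `Fin m ⊕ Fin k`. -/
def codeword {m k : ℕ} (A2 : Matrix (Fin m) (Fin k) (ZMod 2))
    (s : Fin m → ZMod 2) (u : Fin k → ZMod 2) : (Fin m ⊕ Fin k) → ZMod 2 :=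
  Sum.elim (fun j => s j + A2.mulVec u j) u

/-- The parity check matrix `A = [I_m | A_2]`. -/
def pcheck {m k : ℕ} (A2 : Matrix (Fin m) (Fin k) (ZMod 2)) :
    Matrix (Fin m) (Fin m ⊕ Fin k) (ZMod 2) :=
  Matrix.of fun j => Sum.elim (fun j' => if j = j' then 1 else 0) (fun i => A2 j i)

/-- Joint pmf of the uniform secret `S^m` and Eve's observation `Z^n = X^n ⊕ V^n`,
where `X^n` is the coset-coding codeword with independent uniform randomness `U` and
`V^n` is i.i.d. Bernoulli(δ) noise independent of everything else. -/
noncomputable def pSZ {m k : ℕ} (δ : ℝ) (A2 : Matrix (Fin m) (Fin k) (ZMod 2))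
    (s : Fin m → ZMod 2) (z : (Fin m ⊕ Fin k) → ZMod 2) : ℝ :=
  ∑ u : Fin k → ZMod 2, ∑ v : (Fin m ⊕ Fin k) → ZMod 2,
    (1 / 2 ^ m) * (1 / 2 ^ k) * noisePMF δ v *
      (if z = codeword A2 s u + v then 1 else 0)

/-- pmf of `A·V^n`. -/
noncomputable def pAV {m k : ℕ} (δ : ℝ) (A2 : Matrix (Fin m) (Fin k) (ZMod 2))
    (x : Fin m → ZMod 2) : ℝ :=
  ∑ v : (Fin m ⊕ Fin k) → ZMod 2,
    noisePMF δ v * (if (pcheck A2).mulVec v = x then 1 else 0)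

/-
Write `A = pcheck A2`. As `u` ranges over `F_2^k`, `codeword A2 s u` ranges exactly once over the
coset `{x | A x = s}`, so the joint pmf is `P(s, z) = 2^{-(m+k)} · P_{AV}(A z - s)`. Hence `Z` is
uniform on `F_2^{m+k}` (as is `X`), `S` is uniform on `F_2^m`, and since `s ↦ A z - s` is a
bijection for each `z`, `H(S, Z) = (m + k) + H(AV)`. The three entropies combine to `m - H(AV)`.
-/

open Matrix

section Entropy

variable {α : Type*} [Fintype α]

lemma ent_const (c : ℝ) : ent (fun _ : α => c) = -(Fintype.card α * (c * Real.logb 2 c)) := by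
  simp [ent]

lemma ent_const_mul {c : ℝ} (hc : c ≠ 0) {p : α → ℝ} (hp : ∑ a, p a = 1) :
    ent (fun a => c * p a) = -(c * Real.logb 2 c) + c * ent p := by
  have hterm : ∀ a, c * p a * Real.logb 2 (c * p a)
      = c * Real.logb 2 c * p a + c * (p a * Real.logb 2 (p a)) := fun a => by
    rcases eq_or_ne (p a) 0 with h | h
    · simp [h]
    · rw [Real.logb_mul hc h]; ring
  simp only [ent, hterm, sum_add_distrib, ← mul_sum, hp]
  ring

lemma ent_prod_equiv {β γ : Type*} [Fintype β] [Fintype γ] (q : γ → ℝ) (e : β → α ≃ γ) :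
    ent (fun x : α × β => q (e x.2 x.1)) = Fintype.card β * ent q := by
  simp only [ent, Fintype.sum_prod_type, sum_comm (γ := α),
    fun b => (e b).sum_comp (fun y => q y * Real.logb 2 (q y)), sum_const, card_univ,
    nsmul_eq_mul]
  ring

end Entropy

lemma logb_two_inv_two_pow (n : ℕ) : Real.logb 2 ((2 : ℝ) ^ n)⁻¹ = -n := by
  rw [Real.logb_inv, Real.logb_pow, Real.logb_self_eq_one one_lt_two, mul_one]

lemma ent_const_inv_two_pow {α : Type*} [Fintype α] {n : ℕ} (h : Fintype.card α = 2 ^ n) :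
    ent (fun _ : α => ((2 : ℝ) ^ n)⁻¹) = n := by
  rw [ent_const, h, logb_two_inv_two_pow]
  push_cast
  field_simp

lemma card_fun_zmod_two (ι : Type*) [Fintype ι] [DecidableEq ι] :
    Fintype.card (ι → ZMod 2) = 2 ^ Fintype.card ι := by
  rw [Fintype.card_fun, ZMod.card]

lemma sum_noisePMF (δ : ℝ) {ι : Type*} [Fintype ι] [DecidableEq ι] :
    ∑ v : ι → ZMod 2, noisePMF δ v = 1 := by
  have hcoord : ∑ a : ZMod 2, (if a = 1 then δ else 1 - δ) = 1 := by
    change ∑ a : Fin 2, (if a = 1 then δ else 1 - δ) = 1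
    simp [Fin.sum_univ_two]
  simp only [noisePMF, ← Fintype.prod_sum (fun (_ : ι) (a : ZMod 2) => if a = 1 then δ else 1 - δ),
    hcoord, prod_const_one]

section CosetCode

variable {m k : ℕ} (A2 : Matrix (Fin m) (Fin k) (ZMod 2))

lemma pcheck_mulVec (w : Fin m ⊕ Fin k → ZMod 2) :
    pcheck A2 *ᵥ w = w ∘ Sum.inl + A2 *ᵥ (w ∘ Sum.inr) := by
  funext j
  simp [pcheck, Matrix.mulVec, dotProduct, Fintype.sum_sum_type]

lemma pcheck_mulVec_codeword (s : Fin m → ZMod 2) (u : Fin k → ZMod 2) :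
    pcheck A2 *ᵥ codeword A2 s u = s := by
  rw [pcheck_mulVec]
  change s + A2 *ᵥ u + A2 *ᵥ u = s
  rw [add_assoc, ZModModule.add_self, add_zero]

lemma codeword_eq_of_pcheck_mulVec_eq {s : Fin m → ZMod 2} {w : Fin m ⊕ Fin k → ZMod 2}
    (h : pcheck A2 *ᵥ w = s) : codeword A2 s (w ∘ Sum.inr) = w := by
  subst h
  funext j
  cases j with
  | inl j =>
    simp only [codeword, pcheck_mulVec, Sum.elim_inl, Pi.add_apply, Function.comp_apply]
    rw [add_assoc, ZModModule.add_self, add_zero]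
  | inr i => rfl

lemma sum_codeword (s : Fin m → ZMod 2) (f : (Fin m ⊕ Fin k → ZMod 2) → ℝ) :
    ∑ u, f (codeword A2 s u) = ∑ w with pcheck A2 *ᵥ w = s, f w :=
  sum_nbij' (codeword A2 s) (· ∘ Sum.inr)
    (fun u _ => by simp [pcheck_mulVec_codeword])
    (fun _ _ => mem_univ _)
    (fun _ _ => rfl)
    (fun w hw => codeword_eq_of_pcheck_mulVec_eq A2 (mem_filter.mp hw).2)
    (fun _ _ => rfl)

variable (δ : ℝ)

lemma sum_pAV : ∑ x, pAV δ A2 x = 1 := by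
  simp only [pAV, mul_ite, mul_one, mul_zero]
  rw [sum_comm]
  simp only [sum_ite_eq, mem_univ, if_true]
  exact sum_noisePMF δ

lemma pSZ_eq_inv_two_pow_mul_pAV (s : Fin m → ZMod 2) (z : Fin m ⊕ Fin k → ZMod 2) :
    pSZ δ A2 s z = ((2 : ℝ) ^ (m + k))⁻¹ * pAV δ A2 (pcheck A2 *ᵥ z - s) := by
  have hnoise : ∀ u, ∑ v, noisePMF δ v * (if z = codeword A2 s u + v then 1 else 0)
      = noisePMF δ (z - codeword A2 s u) := fun u => by
    simp only [mul_ite, mul_one, mul_zero, eq_comm (a := z), ← eq_sub_iff_add_eq', sum_ite_eq',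
      mem_univ, if_true]
  have hfiber : ∑ u, noisePMF δ (z - codeword A2 s u) = pAV δ A2 (pcheck A2 *ᵥ z - s) := by
    rw [sum_codeword A2 s (fun w => noisePMF δ (z - w)), sum_filter, pAV,
      ← (Equiv.subLeft z).sum_comp]
    refine sum_congr rfl fun v _ => ?_
    simp only [Equiv.subLeft_apply, sub_sub_cancel, mulVec_sub, mul_ite, mul_one, mul_zero]
    exact if_congr (by rw [sub_eq_iff_eq_add', eq_sub_iff_add_eq, eq_comm]) rfl rfl
  simp only [pSZ, mul_assoc, ← mul_sum, hnoise, hfiber, pow_add]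
  ring

lemma sum_secret_pSZ (z : Fin m ⊕ Fin k → ZMod 2) :
    ∑ s, pSZ δ A2 s z = ((2 : ℝ) ^ (m + k))⁻¹ := by
  rw [← mul_one ((2 : ℝ) ^ (m + k))⁻¹, ← sum_pAV A2 δ, mul_sum]
  exact Fintype.sum_equiv (Equiv.subLeft (pcheck A2 *ᵥ z)) _ _ fun s =>
    pSZ_eq_inv_two_pow_mul_pAV A2 δ s z

lemma sum_obs_pSZ (s : Fin m → ZMod 2) : ∑ z, pSZ δ A2 s z = ((2 : ℝ) ^ m)⁻¹ := by
  have hz : ∀ u v, ∑ z : Fin m ⊕ Fin k → ZMod 2,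
      (if z = codeword A2 s u + v then (1 : ℝ) else 0) = 1 := fun u v => by simp
  simp only [pSZ, sum_comm (γ := Fin m ⊕ Fin k → ZMod 2), ← mul_sum, hz, mul_one, sum_const,
    sum_noisePMF, card_univ, card_fun_zmod_two, Fintype.card_fin, nsmul_eq_mul]
  push_cast
  field_simp

lemma ent_pSZ :
    ent (fun p : (Fin m → ZMod 2) × (Fin m ⊕ Fin k → ZMod 2) => pSZ δ A2 p.1 p.2)
      = ((m + k : ℕ) : ℝ) + ent (pAV δ A2) := by
  simp only [pSZ_eq_inv_two_pow_mul_pAV]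
  refine (ent_prod_equiv (fun x => ((2 : ℝ) ^ (m + k))⁻¹ * pAV δ A2 x)
      (fun z => Equiv.subLeft (pcheck A2 *ᵥ z))).trans ?_
  rw [ent_const_mul (by positivity) (sum_pAV A2 δ), logb_two_inv_two_pow, card_fun_zmod_two]
  simp only [Fintype.card_sum, Fintype.card_fin, Nat.cast_pow, Nat.cast_ofNat]
  field_simp

end CosetCode

theorem stmt3_general {m k : ℕ} (δ : ℝ)
    (A2 : Matrix (Fin m) (Fin k) (ZMod 2)) :
    (ent (fun s => ∑ z, pSZ δ A2 s z) + ent (fun z => ∑ s, pSZ δ A2 s z)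
        - ent (fun p : (Fin m → ZMod 2) × ((Fin m ⊕ Fin k) → ZMod 2) => pSZ δ A2 p.1 p.2))
      = (m : ℝ) - ent (pAV δ A2) := by
  have hS : ent (fun s => ∑ z, pSZ δ A2 s z) = m := by
    simp only [sum_obs_pSZ]
    exact ent_const_inv_two_pow (by rw [card_fun_zmod_two, Fintype.card_fin])
  have hZ : ent (fun z => ∑ s, pSZ δ A2 s z) = ((m + k : ℕ) : ℝ) := by
    simp only [sum_secret_pSZ]
    exact ent_const_inv_two_pow (by rw [card_fun_zmod_two, Fintype.card_sum, Fintype.card_fin,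
      Fintype.card_fin])
  rw [hS, hZ, ent_pSZ]
  ring

/-- Theorem 1: for the noiseless-main-channel wiretap channel with coset coding
`A = [I_m | A_2]` and BSC(δ) eavesdropper channel,
`I(S^m; Z^n) = m - H(A·V^n)` (entropies in bits). -/
theorem stmt3 {m k : ℕ} (δ : ℝ) (hδ0 : 0 ≤ δ) (hδ1 : δ ≤ 1)
    (A2 : Matrix (Fin m) (Fin k) (ZMod 2)) :
    (ent (fun s => ∑ z, pSZ δ A2 s z) + ent (fun z => ∑ s, pSZ δ A2 s z)
        - ent (fun p : (Fin m → ZMod 2) × ((Fin m ⊕ Fin k) → ZMod 2) => pSZ δ A2 p.1 p.2))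
      = (m : ℝ) - ent (pAV δ A2) :=
  stmt3_general δ A2
end

section
/- Let a_1, ..., a_k ∈ F_2^m with the first w of them linearly independent and a_j in the span of {a_1,...,a_w} for j > w. Then in the group algebra R[F_2^m], the product Π_{j=1}^k (1/2 + (1/2)t^{a_j}) equals 2^{-w} Π_{i=1}^w (1 + t^{a_i}), i.e., it equals the uniform distribution on the span of {a_1,...,a_k}. -/
/-!
Let `W` be the span of `a_1, …, a_w` and `S_W = ∑_{v ∈ W} t^v`. Translation by `x ∈ W` permutes
`W`, so `t^x S_W = S_W` and every factor `(1 + t^{a_j}) / 2` with `a_j ∈ W` fixes `S_W`. Expanding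
`∏_{i ≤ w} (1 + t^{a_i})` gives `∑_c t^{∑ c_i a_i}` over `c ∈ F_2^w`, which is `S_W` because
`c ↦ ∑ c_i a_i` is a bijection onto `W` by independence. Hence the first `w` factors give
`2^{-w} S_W`, and the remaining ones leave it unchanged.
-/

open Finset

open AddMonoidAlgebra

section Translation

variable {R V : Type*} [Semiring R] [AddGroup V] [Fintype V]

open scoped Classical in
noncomputable def subgroupSum (H : AddSubgroup V) : R[V] :=
  ∑ v ∈ univ.filter (· ∈ H), single v 1

open scoped Classical in
lemma coeff_subgroupSum (H : AddSubgroup V) (v : V) :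
    (subgroupSum H : R[V]).coeff v = if v ∈ H then 1 else 0 := by
  simp [subgroupSum, coeff_sum, Finsupp.single_apply]

lemma single_mul_subgroupSum {H : AddSubgroup V} {x : V} (hx : x ∈ H) (r : R) :
    single x r * subgroupSum H = r • subgroupSum H := by
  classical
  simp only [subgroupSum, mul_sum, smul_sum, single_mul_single, mul_one, smul_single']
  exact sum_equiv (Equiv.addLeft x) (by simp [H.add_mem_cancel_left hx]) (by simp)

end Translation

section Halves

variable {R V : Type*} [Semifield R] [AddCommGroup V]

lemma prod_single_half_add_single_half {ι : Type*} (s : Finset ι) (f : ι → V) :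
    ∏ i ∈ s, (single 0 (1 / 2 : R) + single (f i) (1 / 2)) =
      ((2 : R) ^ #s)⁻¹ • ∏ i ∈ s, (single 0 1 + single (f i) 1) := by
  rw [← inv_pow, smul_prod]
  simp only [smul_add, smul_single', mul_one, one_div]

variable [NeZero (2 : R)] [Fintype V]

lemma single_half_add_single_half_mul_subgroupSum {H : AddSubgroup V} {x : V} (hx : x ∈ H) :
    (single 0 (1 / 2 : R) + single x (1 / 2)) * subgroupSum H = subgroupSum H := by
  rw [add_mul, single_mul_subgroupSum H.zero_mem, single_mul_subgroupSum hx, ← add_smul,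
    ← add_div, add_self_div_two, one_smul]

lemma prod_single_half_add_single_half_mul_subgroupSum {ι : Type*} {H : AddSubgroup V}
    (s : Finset ι) {f : ι → V} (hf : ∀ i ∈ s, f i ∈ H) :
    (∏ i ∈ s, (single 0 (1 / 2 : R) + single (f i) (1 / 2))) * subgroupSum H = subgroupSum H :=
  prod_induction _ (fun p => p * subgroupSum H = subgroupSum H)
    (fun p q hp hq => by rw [mul_assoc, hq, hp]) (one_mul _)
    (fun i hi => single_half_add_single_half_mul_subgroupSum (hf i hi))

end Halves

section Span

variable {R V ι : Type*} [CommSemiring R] [AddCommGroup V] [Module (ZMod 2) V] [Fintype ι]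
  [DecidableEq ι]

lemma prod_single_zero_add_single (b : ι → V) :
    ∏ i, (single 0 (1 : R) + single (b i) 1) =
      ∑ c : ι → ZMod 2, single (Fintype.linearCombination (ZMod 2) b c) 1 := by
  have hbit (x : V) : single 0 (1 : R) + single x 1 = ∑ c : ZMod 2, single (c • x) 1 := by
    rw [show (univ : Finset (ZMod 2)) = {0, 1} by decide, sum_pair zero_ne_one, zero_smul, one_smul]
  simp only [hbit]
  rw [Fintype.prod_sum]
  simp only [prod_single, prod_const_one, Fintype.linearCombination_apply]

variable [Fintype V]

lemma prod_single_zero_add_single_eq_subgroupSum {b : ι → V} (hb : LinearIndependent (ZMod 2) b) :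
    ∏ i, (single 0 (1 : R) + single (b i) 1) =
      subgroupSum (Submodule.span (ZMod 2) (Set.range b)).toAddSubgroup := by
  classical
  have himage : univ.image (Fintype.linearCombination (ZMod 2) b) =
      univ.filter (· ∈ (Submodule.span (ZMod 2) (Set.range b)).toAddSubgroup) := by
    ext v
    simp [← Fintype.range_linearCombination]
  rw [prod_single_zero_add_single, subgroupSum, ← himage,
    sum_image fun c _ c' _ h => hb.fintypeLinearCombination_injective h]

end Span

/-- Let `a_1, …, a_K ∈ F_2^m` with the first `w` linearly independent and every `a_j`
in the span of the first `w`.  Then in the group algebra `R[F_2^m]`,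
`∏_{j=1}^K (1/2 + (1/2) t^{a_j}) = 2^{-w} ∏_{i=1}^w (1 + t^{a_i})`, i.e. the product
is the uniform distribution on the span of `{a_1, …, a_K}` (coefficient `2^{-w}` on
the span and `0` elsewhere). -/
theorem stmt19 {m K w : ℕ} (hw : w ≤ K) (a : Fin K → (Fin m → ZMod 2))
    (hind : LinearIndependent (ZMod 2) (fun i : Fin w => a (Fin.castLE hw i)))
    (hspan : ∀ j : Fin K,
      a j ∈ Submodule.span (ZMod 2) (Set.range (fun i : Fin w => a (Fin.castLE hw i)))) :
    ((∏ j : Fin K,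
        (AddMonoidAlgebra.single (0 : Fin m → ZMod 2) (1 / 2 : ℝ) +
          AddMonoidAlgebra.single (a j) (1 / 2)))
      = ((2 : ℝ) ^ w)⁻¹ •
          ∏ i : Fin w,
            (AddMonoidAlgebra.single (0 : Fin m → ZMod 2) (1 : ℝ) +
              AddMonoidAlgebra.single (a (Fin.castLE hw i)) 1)) ∧
      ∀ v : Fin m → ZMod 2,
        (v ∈ Submodule.span (ZMod 2) (Set.range a) →
          ((∏ j : Fin K,
              (AddMonoidAlgebra.single (0 : Fin m → ZMod 2) (1 / 2 : ℝ) +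
                AddMonoidAlgebra.single (a j) (1 / 2))) :
            AddMonoidAlgebra ℝ (Fin m → ZMod 2)).coeff v = ((2 : ℝ) ^ w)⁻¹) ∧
        (v ∉ Submodule.span (ZMod 2) (Set.range a) →
          ((∏ j : Fin K,
              (AddMonoidAlgebra.single (0 : Fin m → ZMod 2) (1 / 2 : ℝ) +
                AddMonoidAlgebra.single (a j) (1 / 2))) :
            AddMonoidAlgebra ℝ (Fin m → ZMod 2)).coeff v = 0) := by
  classical
  set b : Fin w → (Fin m → ZMod 2) := fun i => a (Fin.castLE hw i)
  set W := Submodule.span (ZMod 2) (Set.range b)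
  have hb : ∏ i, (single 0 (1 : ℝ) + single (b i) 1) = subgroupSum W.toAddSubgroup :=
    prod_single_zero_add_single_eq_subgroupSum hind
  have hprod : ∏ j, (single 0 (1 / 2 : ℝ) + single (a j) (1 / 2)) =
      ((2 : ℝ) ^ w)⁻¹ • subgroupSum W.toAddSubgroup := by
    rw [← prod_mul_prod_compl (univ.map (Fin.castLEEmb hw)), prod_map,
      prod_single_half_add_single_half, card_univ, Fintype.card_fin]
    simp only [Fin.castLEEmb_apply]
    rw [hb, smul_mul_assoc, mul_comm,
      prod_single_half_add_single_half_mul_subgroupSum _ fun j _ => hspan j]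
  have hW : Submodule.span (ZMod 2) (Set.range a) = W :=
    le_antisymm (Submodule.span_le.2 (Set.range_subset_iff.2 hspan))
      (Submodule.span_mono (Set.range_comp_subset_range _ _))
  refine ⟨by rw [hprod, hb], fun v => ?_⟩
  simp only [hprod, hW, coeff_smul_apply, coeff_subgroupSum, Submodule.mem_toAddSubgroup,
    smul_eq_mul]
  exact ⟨fun hv => by rw [if_pos hv, mul_one], fun hv => by rw [if_neg hv, mul_zero]⟩
end
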